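/- arXiv:2403.09691 — 4 statements merged into one kernel-verified Lean document; each statement's English description precedes it below -/
import Mathlib

section
/- For every sufficiently large even integer N: the number of primes p ≤ N^{0.838} with N − p ≥ 1 and Ω(N − p) ≤ 3 is at least S₁(N) − (1/2)·S₂(N) − E(N), where E(N) is the number of primes p ≤ N^{0.838} such that q² divides N − p for some prime q ≥ N^{1/11.99}. -/
/-- `S₁(N)`: the number of primes `p ≤ N^0.838` with `p ∤ N` such that every prime
`q < N^(1/11.99)` with `q ∤ N` satisfies `q ∤ N − p`. -/
noncomputable def S1 (N : ℕ) : ℕ :=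
  {p : ℕ | p.Prime ∧ (p : ℝ) ≤ (N : ℝ) ^ (0.838 : ℝ) ∧ ¬ p ∣ N ∧
    ∀ q : ℕ, q.Prime → (q : ℝ) < (N : ℝ) ^ (1 / 11.99 : ℝ) → ¬ q ∣ N →
      ¬ q ∣ (N - p)}.ncard

/-- `S₂(N) = Σ_q #{p prime : p ≤ N^0.838, p ∤ N, q ∣ N − p, and every prime
`r < N^(1/11.99)` with `r ∤ N` satisfies `r ∤ N − p}`, summed over primes `q` with
`N^(1/11.99) ≤ q < N^(1/3)` and `q ∤ N`; encoded as a count of pairs `(q, p)`. -/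
noncomputable def S2 (N : ℕ) : ℕ :=
  {qp : ℕ × ℕ | qp.1.Prime ∧ (N : ℝ) ^ (1 / 11.99 : ℝ) ≤ (qp.1 : ℝ) ∧
    (qp.1 : ℝ) < (N : ℝ) ^ (1 / 3 : ℝ) ∧ ¬ qp.1 ∣ N ∧
    qp.2.Prime ∧ (qp.2 : ℝ) ≤ (N : ℝ) ^ (0.838 : ℝ) ∧ ¬ qp.2 ∣ N ∧
    qp.1 ∣ (N - qp.2) ∧
    ∀ r : ℕ, r.Prime → (r : ℝ) < (N : ℝ) ^ (1 / 11.99 : ℝ) → ¬ r ∣ N →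
      ¬ r ∣ (N - qp.2)}.ncard

/-- `E(N)`: the number of primes `p ≤ N^0.838` such that `q²` divides `N − p` for some
prime `q ≥ N^(1/11.99)`. -/
noncomputable def E1 (N : ℕ) : ℕ :=
  {p : ℕ | p.Prime ∧ (p : ℝ) ≤ (N : ℝ) ^ (0.838 : ℝ) ∧
    ∃ q : ℕ, q.Prime ∧ (N : ℝ) ^ (1 / 11.99 : ℝ) ≤ (q : ℝ) ∧ q ^ 2 ∣ (N - p)}.ncard

/-!
A prime `p` surviving the sieve by the primes below `z = N^(1/11.99)` either makes `N - p` a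
`P₃`, or `N - p` is divisible by the square of a prime `q ≥ z` (counted by `E`), or `N - p` is
squarefree with at least four prime factors, none of which divides `N` or lies below `z`. In the
last case `N - p ≤ N = y³` with `y = N^(1/3)`: three factors `≥ y` and one more factor `≥ 2`
would give a product `≥ 2y³`, so at least two distinct factors lie below `y`, and `p` is counted
at least twice in `S₂`. Hence `S₁ ≤ #P₃ + E + S₂ / 2`.
-/

open Finset

theorem two_mul_ncard_setOf_two_fst_le {α β : Type*} {P : Set (α × β)} (hP : P.Finite) :
    2 * {b | ∃ a a', a ≠ a' ∧ (a, b) ∈ P ∧ (a', b) ∈ P}.ncard ≤ P.ncard := by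
  classical
  set C := {b | ∃ a a', a ≠ a' ∧ (a, b) ∈ P ∧ (a', b) ∈ P}
  have hC : C.Finite := (hP.image Prod.snd).subset fun b ⟨a, _, _, h, _⟩ => ⟨(a, b), h, rfl⟩
  have hfiber : ∀ b ∈ hC.toFinset, 2 ≤ #{x ∈ hP.toFinset | x.2 = b} := by
    intro b hb
    obtain ⟨a, a', hne, ha, ha'⟩ := hC.mem_toFinset.mp hb
    exact one_lt_card.mpr ⟨(a, b), by simpa, (a', b), by simpa, by simpa⟩
  rw [Set.ncard_eq_toFinset_card _ hC, Set.ncard_eq_toFinset_card _ hP]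
  calc 2 * #hC.toFinset = ∑ _b ∈ hC.toFinset, 2 := by rw [sum_const, smul_eq_mul, mul_comm]
    _ ≤ ∑ b ∈ hC.toFinset, #{x ∈ hP.toFinset | x.2 = b} := sum_le_sum hfiber
    _ = #{x ∈ hP.toFinset | x.2 ∈ hC.toFinset} := sum_card_fiberwise_eq_card_filter _ _ _
    _ ≤ #hP.toFinset := card_filter_le _ _

theorem two_le_card_filter_lt_of_prod_le_pow_three {s : Finset ℕ} (hs : ∀ q ∈ s, 2 ≤ q)
    (hcard : 4 ≤ #s) {y : ℝ} (hy : 0 ≤ y) (hprod : ((∏ q ∈ s, q : ℕ) : ℝ) ≤ y ^ 3) :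
    2 ≤ #{q ∈ s | ((q : ℕ) : ℝ) < y} := by
  classical
  by_contra! hsmall
  have hlarge : 3 ≤ #{q ∈ s | ¬ ((q : ℕ) : ℝ) < y} := by
    have := card_filter_add_card_filter_not (s := s) (fun q : ℕ => (q : ℝ) < y)
    omega
  obtain ⟨t, hts, htcard⟩ := exists_subset_card_eq hlarge
  have hts' : t ⊆ s := hts.trans (filter_subset _ _)
  obtain ⟨r, hr⟩ : (s \ t).Nonempty := by
    rw [← card_pos, card_sdiff_of_subset hts']
    omega
  have hbig : y ^ 3 ≤ ((∏ q ∈ t, q : ℕ) : ℝ) := by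
    rw [Nat.cast_prod, ← htcard, ← prod_const]
    exact prod_le_prod (fun _ _ => hy) fun q hq => not_lt.mp (mem_filter.mp (hts hq)).2
  have hrest : 2 ≤ ∏ q ∈ s \ t, q :=
    (hs r (mem_sdiff.mp hr).1).trans
      (single_le_prod' (fun q hq => (hs q (mem_sdiff.mp hq).1).trans' one_le_two) hr)
  have hsplit : ∏ q ∈ s, q = (∏ q ∈ s \ t, q) * ∏ q ∈ t, q := (prod_sdiff hts').symm
  have hone : (1 : ℝ) ≤ ((∏ q ∈ s, q : ℕ) : ℝ) := by
    exact_mod_cast one_le_prod' fun q hq => (hs q hq).trans' one_le_two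
  have : 2 * y ^ 3 ≤ ((∏ q ∈ s, q : ℕ) : ℝ) := by
    rw [hsplit, Nat.cast_mul]
    exact mul_le_mul (by exact_mod_cast hrest) hbig (by positivity) (by positivity)
  linarith

section Sieve

/- With `X = N^0.838`, `z = N^(1/11.99)` and `y = N^(1/3)` the cardinalities of `siftedPrimes`,
`siftedPairs` and `primesWithLargeSquareDivisor` are `S1 N`, `S2 N` and `E1 N`, and
`p3Representations N X` is the set counted on the right of the theorem. -/
variable (N : ℕ) (X z y : ℝ)

def siftedPrimes : Set ℕ :=
  {p | p.Prime ∧ (p : ℝ) ≤ X ∧ ¬ p ∣ N ∧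
    ∀ q : ℕ, q.Prime → (q : ℝ) < z → ¬ q ∣ N → ¬ q ∣ (N - p)}

def siftedPairs : Set (ℕ × ℕ) :=
  {qp | qp.1.Prime ∧ z ≤ (qp.1 : ℝ) ∧ (qp.1 : ℝ) < y ∧ ¬ qp.1 ∣ N ∧
    qp.2.Prime ∧ (qp.2 : ℝ) ≤ X ∧ ¬ qp.2 ∣ N ∧ qp.1 ∣ (N - qp.2) ∧
    ∀ r : ℕ, r.Prime → (r : ℝ) < z → ¬ r ∣ N → ¬ r ∣ (N - qp.2)}

def primesWithLargeSquareDivisor : Set ℕ :=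
  {p | p.Prime ∧ (p : ℝ) ≤ X ∧
    ∃ q : ℕ, q.Prime ∧ z ≤ (q : ℝ) ∧ q ^ 2 ∣ (N - p)}

def p3Representations : Set ℕ :=
  {p | p.Prime ∧ (p : ℝ) ≤ X ∧ 1 ≤ N - p ∧ (N - p).primeFactorsList.length ≤ 3}

variable {N X z y}

theorem not_dvd_and_le_of_dvd_sub_of_mem_siftedPrimes {p q : ℕ} (hp : p ∈ siftedPrimes N X z)
    (hpN : p ≤ N) (hq : q.Prime) (hqp : q ∣ N - p) : ¬ q ∣ N ∧ z ≤ q := by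
  obtain ⟨hpp, -, hpN', hsift⟩ := hp
  have hqN : ¬ q ∣ N := fun hqN => by
    have hqp' : q ∣ p := by simpa [Nat.sub_sub_self hpN] using Nat.dvd_sub hqN hqp
    exact hpN' ((Nat.prime_dvd_prime_iff_eq hq hpp).mp hqp' ▸ hqN)
  exact ⟨hqN, not_lt.mp fun hqz => hsift q hq hqz hqN hqp⟩

theorem squarefree_sub_of_mem_siftedPrimes {p : ℕ} (hp : p ∈ siftedPrimes N X z) (hpN : p ≤ N)
    (hE : p ∉ primesWithLargeSquareDivisor N X z) : Squarefree (N - p) := by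
  rw [Nat.squarefree_iff_prime_squarefree]
  intro q hq hqq
  have hzq := (not_dvd_and_le_of_dvd_sub_of_mem_siftedPrimes hp hpN hq
    (dvd_of_mul_right_dvd hqq)).2
  exact hE ⟨hp.1, hp.2.1, q, hq, hzq, by rwa [sq]⟩

theorem siftedPrimes_subset (hXN : X < N) (hy : 0 ≤ y) (hNy : (N : ℝ) ≤ y ^ 3) :
    siftedPrimes N X z ⊆ p3Representations N X ∪ primesWithLargeSquareDivisor N X z ∪
      {p | ∃ q q', q ≠ q' ∧
        (q, p) ∈ siftedPairs N X z y ∧ (q', p) ∈ siftedPairs N X z y} := by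
  intro p hp
  have ⟨hpp, hpX, hpN, hsift⟩ := hp
  have hpN' : p < N := by exact_mod_cast hpX.trans_lt hXN
  by_cases hP3 : (N - p).primeFactorsList.length ≤ 3
  · exact Or.inl (Or.inl ⟨hpp, hpX, by omega, hP3⟩)
  by_cases hE : p ∈ primesWithLargeSquareDivisor N X z
  · exact Or.inl (Or.inr hE)
  refine Or.inr ?_
  have hsf := squarefree_sub_of_mem_siftedPrimes hp hpN'.le hE
  have hcard : 4 ≤ #(N - p).primeFactors := by
    rw [← Nat.toFinset_factors, List.toFinset_card_of_nodup hsf.nodup_primeFactorsList]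
    omega
  have hprod : ((∏ q ∈ (N - p).primeFactors, q : ℕ) : ℝ) ≤ y ^ 3 := by
    rw [Nat.prod_primeFactors_of_squarefree hsf]
    exact (Nat.cast_le.mpr (Nat.sub_le N p)).trans hNy
  have hpair : ∀ r ∈ {q ∈ (N - p).primeFactors | ((q : ℕ) : ℝ) < y},
      (r, p) ∈ siftedPairs N X z y := by
    intro r hr
    obtain ⟨hrm, hry⟩ := mem_filter.mp hr
    have hrp := Nat.prime_of_mem_primeFactors hrm
    have hrdvd := Nat.dvd_of_mem_primeFactors hrm
    obtain ⟨hrN, hzr⟩ := not_dvd_and_le_of_dvd_sub_of_mem_siftedPrimes hp hpN'.le hrp hrdvd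
    exact ⟨hrp, hzr, hry, hrN, hpp, hpX, hpN, hrdvd, hsift⟩
  obtain ⟨q, hq, q', hq', hne⟩ := one_lt_card.mp <| two_le_card_filter_lt_of_prod_le_pow_three
    (fun q hq => (Nat.prime_of_mem_primeFactors hq).two_le) hcard hy hprod
  exact ⟨q, q', hne, hpair q hq, hpair q' hq'⟩

theorem ncard_siftedPrimes_sub_le (hXN : X < N) (hy : 0 ≤ y) (hNy : (N : ℝ) ≤ y ^ 3) :
    ((siftedPrimes N X z).ncard : ℝ) - 1 / 2 * (siftedPairs N X z y).ncard -
      (primesWithLargeSquareDivisor N X z).ncard ≤ (p3Representations N X).ncard := by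
  have hle : ∀ {p : ℕ}, (p : ℝ) ≤ X → p ≤ N := fun h => by exact_mod_cast h.trans hXN.le
  set T := p3Representations N X
  set E := primesWithLargeSquareDivisor N X z
  set P := siftedPairs N X z y
  set C := {p | ∃ q q', q ≠ q' ∧ (q, p) ∈ P ∧ (q', p) ∈ P}
  have hT : T.Finite := (Set.finite_Iic N).subset fun _ hp => hle hp.2.1
  have hE : E.Finite := (Set.finite_Iic N).subset fun _ hp => hle hp.2.1
  have hP : P.Finite := by
    refine ((Set.finite_Iic N).prod (Set.finite_Iic N)).subset ?_
    rintro ⟨q, p⟩ ⟨-, -, -, -, -, hpX, -, hqp, -⟩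
    have hpN : p < N := by exact_mod_cast hpX.trans_lt hXN
    exact ⟨(Nat.le_of_dvd (by omega) hqp).trans (Nat.sub_le N p), hpN.le⟩
  have hC : C.Finite := (hP.image Prod.snd).subset fun p ⟨q, _, _, h, _⟩ => ⟨(q, p), h, rfl⟩
  have hsifted : (siftedPrimes N X z).ncard ≤ (T ∪ E ∪ C).ncard :=
    Set.ncard_le_ncard (siftedPrimes_subset hXN hy hNy) ((hT.union hE).union hC)
  have hunion := Set.ncard_union_le (T ∪ E) C
  have hunion' := Set.ncard_union_le T E
  have hpairs : 2 * C.ncard ≤ P.ncard := two_mul_ncard_setOf_two_fst_le hP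
  rify at hsifted hunion hunion' hpairs
  linarith

end Sieve

theorem weighted_sieve_small_primes :
    ∃ N₀ : ℕ, ∀ N : ℕ, N₀ ≤ N → Even N →
      (S1 N : ℝ) - (1 / 2) * (S2 N : ℝ) - (E1 N : ℝ) ≤
        ({p : ℕ | p.Prime ∧ (p : ℝ) ≤ (N : ℝ) ^ (0.838 : ℝ) ∧ 1 ≤ N - p ∧
            (N - p).primeFactorsList.length ≤ 3}.ncard : ℝ) := by
  refine ⟨2, fun N hN _ => ?_⟩
  have hN1 : (1 : ℝ) < N := by exact_mod_cast hN
  have hcube : (N : ℝ) ≤ ((N : ℝ) ^ (1 / 3 : ℝ)) ^ 3 := by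
    rw [← Real.rpow_natCast, ← Real.rpow_mul (by positivity)]
    norm_num
  exact ncard_siftedPrimes_sub_le (X := (N : ℝ) ^ (0.838 : ℝ))
    (z := (N : ℝ) ^ (1 / 11.99 : ℝ))
    (Real.rpow_lt_self_of_one_lt hN1 (by norm_num)) (by positivity) hcube
end

section
/- Let F, f : (0, ∞) → ℝ be a pair of linear-sieve functions, i.e. F and f are continuous on (0, ∞), F(s) = 2e^γ/s and f(s) = 0 for 0 < s ≤ 2, and for every s > 2 the maps s ↦ sF(s) and s ↦ sf(s) are differentiable at s with derivatives (sF(s))' = f(s−1) and (sf(s))' = F(s−1). Then for all s with 2 ≤ s ≤ 4, f(s) = 2e^γ log(s−1)/s. -/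
/-!
Since `f` vanishes on `(0, 2]`, `(s F(s))' = f(s - 1) = 0` for `s ∈ (2, 3]`, so `s F(s)` stays
equal to `2 F(2) = 2e^γ` up to `s = 3`. Then, for `s ∈ (2, 4]`, `(s f(s))' = F(s - 1) = 2e^γ / (s - 1)`,
which is also the derivative of `2e^γ log (s - 1)`; both functions vanish at `s = 2`.
-/

open Set Real

theorem eq_of_hasDerivAt_zero_on_Ioo {g : ℝ → ℝ} {a b : ℝ} (hab : a ≤ b)
    (hg : ContinuousOn g (Icc a b)) (hg' : ∀ x ∈ Ioo a b, HasDerivAt g 0 x) : g b = g a := by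
  rcases hab.eq_or_lt with rfl | hlt
  · rfl
  obtain ⟨c, -, hc⟩ := exists_hasDerivAt_eq_slope g (fun _ => 0) hlt hg hg'
  have := (div_eq_zero_iff.mp hc.symm).resolve_right (sub_ne_zero.mpr hlt.ne')
  linarith

section LinearSieve

variable {F f : ℝ → ℝ} {c : ℝ}

theorem upper_sieve_eq_div_of_le_three (hFc : ContinuousOn F (Ioi 0))
    (hF0 : ∀ s, 0 < s → s ≤ 2 → F s = c / s) (hf0 : ∀ s, 0 < s → s ≤ 2 → f s = 0)
    (hF' : ∀ s, 2 < s → HasDerivAt (fun t => t * F t) (f (s - 1)) s)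
    {s : ℝ} (hs : 0 < s) (hs3 : s ≤ 3) : F s = c / s := by
  rcases le_or_gt s 2 with hs2 | hs2
  · exact hF0 s hs hs2
  have hconst : s * F s = 2 * F 2 := by
    refine eq_of_hasDerivAt_zero_on_Ioo (g := fun t => t * F t) hs2.le ?_ fun x hx => ?_
    · exact continuousOn_id.mul (hFc.mono fun t ht => by simp only [mem_Ioi]; linarith [ht.1])
    · simpa only [hf0 (x - 1) (by linarith [hx.1]) (by linarith [hx.2])] using hF' x hx.1
  rw [hF0 2 two_pos le_rfl, mul_div_cancel₀ c two_ne_zero] at hconst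
  rw [← hconst, mul_div_cancel_left₀ _ hs.ne']

theorem lower_sieve_eq_log_div_of_le_four (hfc : ContinuousOn f (Ioi 0))
    (hF3 : ∀ s, 0 < s → s ≤ 3 → F s = c / s) (hf2 : f 2 = 0)
    (hf' : ∀ s, 2 < s → HasDerivAt (fun t => t * f t) (F (s - 1)) s)
    {s : ℝ} (hs2 : 2 ≤ s) (hs4 : s ≤ 4) : f s = c * log (s - 1) / s := by
  have hconst : s * f s - c * log (s - 1) = 2 * f 2 - c * log (2 - 1) := by
    refine eq_of_hasDerivAt_zero_on_Ioo (g := fun t => t * f t - c * log (t - 1)) hs2 ?_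
      fun x hx => ?_
    · refine (continuousOn_id.mul (hfc.mono fun t ht => ?_)).sub
        (continuousOn_const.mul ((continuousOn_id.sub continuousOn_const).log fun t ht => ?_))
      · simp only [mem_Ioi]; linarith [ht.1]
      · exact (sub_pos.mpr (by linarith [ht.1] : (1 : ℝ) < t)).ne'
    · have hlog : HasDerivAt (fun t => log (t - 1)) (1 / (x - 1)) x :=
        ((hasDerivAt_id x).sub_const 1).log (sub_pos.mpr (by linarith [hx.1] : (1 : ℝ) < x)).ne'
      refine ((hf' x hx.1).sub (hlog.const_mul c)).congr_deriv ?_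
      rw [hF3 (x - 1) (by linarith [hx.1]) (by linarith [hx.2])]
      field_simp
      ring
  have hs : s ≠ 0 := by linarith
  norm_num [hf2] at hconst
  rw [eq_div_iff hs]
  linarith

end LinearSieve

theorem linear_sieve_f_on_2_4
    (F f : ℝ → ℝ)
    (hFc : ContinuousOn F (Set.Ioi 0)) (hfc : ContinuousOn f (Set.Ioi 0))
    (hF0 : ∀ s : ℝ, 0 < s → s ≤ 2 →
      F s = 2 * Real.exp Real.eulerMascheroniConstant / s)
    (hf0 : ∀ s : ℝ, 0 < s → s ≤ 2 → f s = 0)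
    (hF' : ∀ s : ℝ, 2 < s → HasDerivAt (fun t => t * F t) (f (s - 1)) s)
    (hf' : ∀ s : ℝ, 2 < s → HasDerivAt (fun t => t * f t) (F (s - 1)) s) :
    ∀ s : ℝ, 2 ≤ s → s ≤ 4 →
      f s = 2 * Real.exp Real.eulerMascheroniConstant * Real.log (s - 1) / s :=
  fun _ hs2 hs4 =>
    lower_sieve_eq_log_div_of_le_four hfc
      (fun _ hs hs3 => upper_sieve_eq_div_of_le_three hFc hF0 hf0 hF' hs hs3)
      (hf0 2 two_pos le_rfl) hf' hs2 hs4
end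

section
/- Let F, f : (0, ∞) → ℝ be a pair of linear-sieve functions, i.e. F and f are continuous on (0, ∞), F(s) = 2e^γ/s and f(s) = 0 for 0 < s ≤ 2, and for every s > 2 the maps s ↦ sF(s) and s ↦ sf(s) are differentiable at s with derivatives (sF(s))' = f(s−1) and (sf(s))' = F(s−1). Then for all s with 4 ≤ s ≤ 6, f(s) = (2e^γ/s) · ( log(s−1) + ∫₃^{s−1} (1/t) ( ∫₂^{t−1} log(u−1)/u du ) dt ). -/
/-!
Integrating `(s φ(s))' = ψ(s - 1)` from `a` to `b` gives `b φ(b) = a φ(a) + ∫_{a-1}^{b-1} ψ`,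
so the functions can be computed one unit interval at a time from their values on `(0, 2]`
(with `c = 2 e^γ`): `F(s) = c/s` on `(0, 3]`, then `s f(s) = c log(s - 1)` on `[2, 4]`, then
`s F(s) = c (1 + ∫_2^{s-1} log(u - 1)/u du)` on `[3, 5]`, and finally `f` on `[4, 6]`.
-/

open Real Set MeasureTheory intervalIntegral

theorem mul_eq_mul_add_integral_of_hasDerivAt_mul {φ ψ : ℝ → ℝ} {a b : ℝ} (hab : a ≤ b)
    (hφ : ContinuousOn φ (Icc a b)) (hψ : ContinuousOn ψ (Icc (a - 1) (b - 1)))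
    (hderiv : ∀ t ∈ Ioo a b, HasDerivAt (fun t => t * φ t) (ψ (t - 1)) t) :
    b * φ b = a * φ a + ∫ t in (a - 1)..(b - 1), ψ t := by
  have hint : IntervalIntegrable (fun t => ψ (t - 1)) volume a b :=
    (hψ.comp (continuous_sub_right 1).continuousOn
      fun t ht => ⟨by linarith [ht.1], by linarith [ht.2]⟩).intervalIntegrable_of_Icc hab
  have hftc := integral_eq_sub_of_hasDeriv_right_of_le (f := fun t => t * φ t) hab
    (continuousOn_id.mul hφ) (fun t ht => (hderiv t ht).hasDerivWithinAt) hint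
  rw [integral_comp_sub_right (fun t => ψ t)] at hftc
  linarith

theorem integral_const_div_of_pos (c : ℝ) {a b : ℝ} (ha : 0 < a) (hb : 0 < b) :
    ∫ t in a..b, c / t = c * log (b / a) := by
  simp only [div_eq_mul_inv c]
  rw [intervalIntegral.integral_const_mul, integral_inv_of_pos ha hb]

theorem continuousOn_integral_log_sub_one_div {x : ℝ} (hx : 3 ≤ x) :
    ContinuousOn (fun t => ∫ u in (2 : ℝ)..(t - 1), log (u - 1) / u) (Icc 3 x) := by
  have h2x : (2 : ℝ) ≤ x - 1 := by linarith
  have hg : ContinuousOn (fun u => log (u - 1) / u) (uIcc 2 (x - 1)) := by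
    rw [uIcc_of_le h2x]
    exact (continuousOn_log.comp (continuous_sub_right 1).continuousOn
      fun u hu => sub_ne_zero.2 (by linarith [hu.1])).div continuousOn_id
      fun u hu => (two_pos.trans_le hu.1).ne'
  have hprim := continuousOn_primitive_interval (μ := volume)
    (hg.integrableOn_compact isCompact_uIcc)
  rw [uIcc_of_le h2x] at hprim
  exact hprim.comp (continuous_sub_right 1).continuousOn
    fun t ht => ⟨by linarith [ht.1], by linarith [ht.2]⟩

structure IsLinearSievePair (c : ℝ) (F f : ℝ → ℝ) : Prop where
  continuousOn_F : ContinuousOn F (Ioi 0)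
  continuousOn_f : ContinuousOn f (Ioi 0)
  F_eq_div : ∀ s, 0 < s → s ≤ 2 → F s = c / s
  f_eq_zero : ∀ s, 0 < s → s ≤ 2 → f s = 0
  hasDerivAt_mul_F : ∀ s, 2 < s → HasDerivAt (fun t => t * F t) (f (s - 1)) s
  hasDerivAt_mul_f : ∀ s, 2 < s → HasDerivAt (fun t => t * f t) (F (s - 1)) s

namespace IsLinearSievePair

variable {c : ℝ} {F f : ℝ → ℝ}

theorem mul_F_eq_add_integral (h : IsLinearSievePair c F f) {a b : ℝ} (ha : 2 ≤ a)
    (hab : a ≤ b) : b * F b = a * F a + ∫ t in (a - 1)..(b - 1), f t :=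
  mul_eq_mul_add_integral_of_hasDerivAt_mul hab
    (h.continuousOn_F.mono (Icc_subset_Ioi_iff hab |>.2 (by linarith)))
    (h.continuousOn_f.mono (Icc_subset_Ioi_iff (by linarith) |>.2 (by linarith)))
    fun t ht => h.hasDerivAt_mul_F t (ha.trans_lt ht.1)

theorem mul_f_eq_add_integral (h : IsLinearSievePair c F f) {a b : ℝ} (ha : 2 ≤ a)
    (hab : a ≤ b) : b * f b = a * f a + ∫ t in (a - 1)..(b - 1), F t :=
  mul_eq_mul_add_integral_of_hasDerivAt_mul hab
    (h.continuousOn_f.mono (Icc_subset_Ioi_iff hab |>.2 (by linarith)))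
    (h.continuousOn_F.mono (Icc_subset_Ioi_iff (by linarith) |>.2 (by linarith)))
    fun t ht => h.hasDerivAt_mul_f t (ha.trans_lt ht.1)

theorem F_eq_div_of_le_three (h : IsLinearSievePair c F f) {x : ℝ} (hx0 : 0 < x)
    (hx3 : x ≤ 3) : F x = c / x := by
  rcases le_or_gt x 2 with hx2 | hx2
  · exact h.F_eq_div x hx0 hx2
  have hzero : ∫ t in (2 - 1 : ℝ)..(x - 1), f t = 0 := by
    rw [integral_congr (g := fun _ => 0) fun t ht => ?_, intervalIntegral.integral_zero]
    rw [uIcc_of_le (by linarith)] at ht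
    exact h.f_eq_zero t (by linarith [ht.1]) (by linarith [ht.2])
  have hxF := h.mul_F_eq_add_integral le_rfl hx2.le
  rw [hzero, h.F_eq_div 2 two_pos le_rfl] at hxF
  rw [eq_div_iff hx0.ne']
  linarith

theorem f_eq_mul_log_div_of_le_four (h : IsLinearSievePair c F f) {x : ℝ} (hx2 : 2 ≤ x)
    (hx4 : x ≤ 4) : f x = c * log (x - 1) / x := by
  have hlog : ∫ t in (2 - 1 : ℝ)..(x - 1), F t = c * log (x - 1) := by
    rw [integral_congr (g := fun t => c / t) fun t ht => ?_,
      integral_const_div_of_pos c (by norm_num) (by linarith)]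
    · norm_num
    rw [uIcc_of_le (by linarith)] at ht
    exact h.F_eq_div_of_le_three (by linarith [ht.1]) (by linarith [ht.2])
  have hxf := h.mul_f_eq_add_integral le_rfl hx2
  rw [hlog, h.f_eq_zero 2 two_pos le_rfl] at hxf
  rw [eq_div_iff (by positivity)]
  linarith

theorem mul_F_eq_of_le_five (h : IsLinearSievePair c F f) {x : ℝ} (hx3 : 3 ≤ x)
    (hx5 : x ≤ 5) :
    x * F x = c * (1 + ∫ u in (2 : ℝ)..(x - 1), log (u - 1) / u) := by
  have hf : ∫ t in (3 - 1 : ℝ)..(x - 1), f t =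
      c * ∫ u in (2 : ℝ)..(x - 1), log (u - 1) / u := by
    rw [← intervalIntegral.integral_const_mul]
    norm_num only
    refine integral_congr fun t ht => ?_
    rw [uIcc_of_le (by linarith)] at ht
    simp only [h.f_eq_mul_log_div_of_le_four ht.1 (by linarith [ht.2]), mul_div_assoc]
  have hxF := h.mul_F_eq_add_integral (by norm_num) hx3
  rw [hf, h.F_eq_div_of_le_three three_pos le_rfl] at hxF
  linear_combination hxF

theorem mul_f_eq_of_le_six (h : IsLinearSievePair c F f) {x : ℝ} (hx4 : 4 ≤ x)
    (hx6 : x ≤ 6) :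
    x * f x = c * (log (x - 1) +
      ∫ t in (3 : ℝ)..(x - 1), (1 / t) * ∫ u in (2 : ℝ)..(t - 1), log (u - 1) / u) := by
  have hne : ∀ t ∈ Icc (3 : ℝ) (x - 1), t ≠ 0 := fun t ht => (three_pos.trans_le ht.1).ne'
  have hF : ∫ t in (4 - 1 : ℝ)..(x - 1), F t = c * log ((x - 1) / 3) +
      c * ∫ t in (3 : ℝ)..(x - 1), (1 / t) * ∫ u in (2 : ℝ)..(t - 1), log (u - 1) / u := by
    rw [← integral_const_div_of_pos c three_pos (by linarith),
      ← intervalIntegral.integral_const_mul, ← intervalIntegral.integral_add]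
    · norm_num only
      refine integral_congr fun t ht => ?_
      rw [uIcc_of_le (by linarith)] at ht
      have ht0 : t ≠ 0 := by linarith [ht.1]
      have htF := h.mul_F_eq_of_le_five ht.1 (by linarith [ht.2])
      field_simp
      linear_combination htF
    · exact (continuousOn_const.div continuousOn_id hne).intervalIntegrable_of_Icc (by linarith)
    · exact (continuousOn_const.mul ((continuousOn_const.div continuousOn_id hne).mul
        (continuousOn_integral_log_sub_one_div (by linarith)))).intervalIntegrable_of_Icc
        (by linarith)
  have hf4 : 4 * f 4 = c * log 3 := by
    rw [h.f_eq_mul_log_div_of_le_four (by norm_num) le_rfl]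
    norm_num
    ring
  have hxf := h.mul_f_eq_add_integral (by norm_num) hx4
  rw [hF, hf4, log_div (by linarith) three_ne_zero] at hxf
  linear_combination hxf

end IsLinearSievePair

theorem linear_sieve_f_on_4_6
    (F f : ℝ → ℝ)
    (hFc : ContinuousOn F (Set.Ioi 0)) (hfc : ContinuousOn f (Set.Ioi 0))
    (hF0 : ∀ s : ℝ, 0 < s → s ≤ 2 →
      F s = 2 * Real.exp Real.eulerMascheroniConstant / s)
    (hf0 : ∀ s : ℝ, 0 < s → s ≤ 2 → f s = 0)
    (hF' : ∀ s : ℝ, 2 < s → HasDerivAt (fun t => t * F t) (f (s - 1)) s)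
    (hf' : ∀ s : ℝ, 2 < s → HasDerivAt (fun t => t * f t) (F (s - 1)) s) :
    ∀ s : ℝ, 4 ≤ s → s ≤ 6 →
      f s = 2 * Real.exp Real.eulerMascheroniConstant / s *
        (Real.log (s - 1) +
          ∫ t in (3 : ℝ)..(s - 1),
            (1 / t) * ∫ u in (2 : ℝ)..(t - 1), Real.log (u - 1) / u) := by
  intro s hs4 hs6
  have hsieve : IsLinearSievePair (2 * exp eulerMascheroniConstant) F f :=
    ⟨hFc, hfc, hF0, hf0, hF', hf'⟩
  rw [div_mul_eq_mul_div, eq_div_iff (by positivity), mul_comm]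
  exact hsieve.mul_f_eq_of_le_six hs4 hs6
end

section
/- Let F, f : (0, ∞) → ℝ be a pair of linear-sieve functions, i.e. F and f are continuous on (0, ∞), F(s) = 2e^γ/s and f(s) = 0 for 0 < s ≤ 2, and for every s > 2 the maps s ↦ sF(s) and s ↦ sf(s) are differentiable at s with derivatives (sF(s))' = f(s−1) and (sf(s))' = F(s−1). Then for all s with 5 ≤ s ≤ 7, F(s) = (2e^γ/s) · ( 1 + ∫₂^{s−1} log(t−1)/t dt + ∫₂^{s−3} (log(t−1)/t) ( ∫_{t+2}^{s−1} (1/u) log((u−1)/(t+1)) du ) dt ). -/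
/-!
Write `c = 2e^γ`, `P(x) = ∫₂ˣ log (t-1)/t dt` and `M(x) = ∫₂ˣ log (t-1) log (t+1)/t dt`.
Integrating `(sF)' = f(s-1)` and `(sf)' = F(s-1)` one unit interval at a time from the initial
data gives `F = c/s` on `(0, 3]`, `sf = c log (s-1)` on `[2, 4]`, `sF = c (1 + P(s-1))` on
`[3, 5]`, `sf = c ((1 + P(s-2)) log (s-1) - M(s-2))` on `[4, 6]`, and finally `sF` on `[5, 7]`.
Each step is uniqueness for `y' = g`: both sides agree at the left end point and have the same
derivative. For the last step, the inner integral of the double integral is elementary in terms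
of `P`, which gives the double integral a closed form in `P`, `M` and one more primitive that can
be differentiated.
-/

open Set Real intervalIntegral

theorem eqOn_Icc_of_hasDerivAt {g h d : ℝ → ℝ} {a b : ℝ} (hg : ContinuousOn g (Icc a b))
    (hg' : ∀ x ∈ Ioo a b, HasDerivAt g (d x) x) (hh' : ∀ x ∈ Icc a b, HasDerivAt h (d x) x)
    (hgh : g a = h a) : EqOn g h (Icc a b) := by
  intro x hx
  have hsub : Ioo a x ⊆ Ioo a b := Ioo_subset_Ioo_right hx.2
  have hint := integral_eq_sub_of_hasDerivAt_of_le hx.1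
    ((hg.sub fun y hy => (hh' y hy).continuousAt.continuousWithinAt).mono
      (Icc_subset_Icc_right hx.2))
    (fun y hy => (hg' y (hsub hy)).sub (hh' y (Ioo_subset_Icc_self (hsub hy))))
    (by simp)
  simp only [Pi.sub_apply, sub_self, intervalIntegral.integral_zero] at hint
  linarith

theorem eq_div_of_hasDerivAt_mul {u u' v : ℝ → ℝ} {a b s : ℝ} (ha : 0 < a)
    (hu : ContinuousOn u (Ioi 0)) (hu' : ∀ x ∈ Ioo a b, HasDerivAt (fun t => t * u t) (u' x) x)
    (hv : ∀ x ∈ Icc a b, HasDerivAt v (u' x) x) (hva : u a = v a / a) (hs : s ∈ Icc a b) :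
    u s = v s / s := by
  have hcont : ContinuousOn (fun t => t * u t) (Icc a b) :=
    continuousOn_id.mul (hu.mono fun t ht => ha.trans_le ht.1)
  have key := eqOn_Icc_of_hasDerivAt hcont hu' hv (by simp only [hva]; field_simp) hs
  rw [eq_div_iff (ha.trans_le hs.1).ne', ← key, mul_comm]

theorem hasDerivAt_integral_of_continuousOn_Ioi {g : ℝ → ℝ} {L a x : ℝ}
    (hg : ContinuousOn g (Ioi L)) (ha : L < a) (hx : L < x) :
    HasDerivAt (fun y => ∫ t in a..y, g t) (g x) x :=
  integral_hasDerivAt_right (hg.mono (ordConnected_Ioi.uIcc_subset ha hx)).intervalIntegrable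
    (hg.stronglyMeasurableAtFilter isOpen_Ioi x hx) (hg.continuousAt (Ioi_mem_nhds hx))

namespace LinearSieve

noncomputable def kernel (t : ℝ) : ℝ := log (t - 1) / t

noncomputable def kernelIntegral (x : ℝ) : ℝ := ∫ t in (2 : ℝ)..x, kernel t

noncomputable def logKernelIntegral (x : ℝ) : ℝ := ∫ t in (2 : ℝ)..x, kernel t * log (t + 1)

noncomputable def crossIntegral (x : ℝ) : ℝ :=
  ∫ t in (2 : ℝ)..x, kernel t * (kernelIntegral (t + 2) - log (t + 1) * log (t + 2))

noncomputable def doubleIntegral (s : ℝ) : ℝ :=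
  ∫ t in (2 : ℝ)..(s - 3), kernel t * ∫ u in (t + 2)..(s - 1), 1 / u * log ((u - 1) / (t + 1))

theorem continuousOn_kernel : ContinuousOn kernel (Ioi 1) :=
  ((continuous_sub_right 1).continuousOn.log fun _ ht => (sub_pos.2 ht).ne').div
    continuousOn_id fun _ ht => (zero_lt_one.trans ht).ne'

theorem continuousOn_log_add {a : ℝ} (ha : -1 ≤ a) :
    ContinuousOn (fun t => log (t + a)) (Ioi 1) :=
  (continuous_add_const a).continuousOn.log fun t (ht : 1 < t) => by linarith

theorem intervalIntegrable_kernel {a b : ℝ} (ha : 1 < a) (hb : 1 < b) :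
    IntervalIntegrable kernel MeasureTheory.volume a b :=
  (continuousOn_kernel.mono (ordConnected_Ioi.uIcc_subset ha hb)).intervalIntegrable

theorem hasDerivAt_kernelIntegral {x : ℝ} (hx : 1 < x) :
    HasDerivAt kernelIntegral (kernel x) x :=
  hasDerivAt_integral_of_continuousOn_Ioi continuousOn_kernel one_lt_two hx

theorem continuousOn_kernelIntegral : ContinuousOn kernelIntegral (Ioi 1) :=
  fun _ hx => (hasDerivAt_kernelIntegral hx).continuousAt.continuousWithinAt

theorem continuousOn_kernel_mul_log : ContinuousOn (fun t => kernel t * log (t + 1)) (Ioi 1) :=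
  continuousOn_kernel.mul (continuousOn_log_add (by norm_num))

theorem hasDerivAt_logKernelIntegral {x : ℝ} (hx : 1 < x) :
    HasDerivAt logKernelIntegral (kernel x * log (x + 1)) x :=
  hasDerivAt_integral_of_continuousOn_Ioi continuousOn_kernel_mul_log one_lt_two hx

theorem continuousOn_crossIntegrand :
    ContinuousOn (fun t => kernel t * (kernelIntegral (t + 2) - log (t + 1) * log (t + 2)))
      (Ioi 1) :=
  continuousOn_kernel.mul <|
    (continuousOn_kernelIntegral.comp (continuousOn_id.add continuousOn_const)
      fun t (ht : 1 < t) => show 1 < t + 2 by linarith).sub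
    ((continuousOn_log_add (by norm_num)).mul (continuousOn_log_add (by norm_num)))

theorem hasDerivAt_crossIntegral {x : ℝ} (hx : 1 < x) :
    HasDerivAt crossIntegral
      (kernel x * (kernelIntegral (x + 2) - log (x + 1) * log (x + 2))) x :=
  hasDerivAt_integral_of_continuousOn_Ioi continuousOn_crossIntegrand one_lt_two hx

theorem integral_one_div_mul_log_div {t x : ℝ} (ht : -1 < t) (hx : 1 < x) :
    ∫ u in (t + 2)..x, 1 / u * log ((u - 1) / (t + 1)) =
      kernelIntegral x - kernelIntegral (t + 2) - log (t + 1) * (log x - log (t + 2)) := by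
  have hsub : uIcc (t + 2) x ⊆ Ioi 1 :=
    ordConnected_Ioi.uIcc_subset (show 1 < t + 2 by linarith) hx
  have hkernel : ∫ u in (t + 2)..x, kernel u = kernelIntegral x - kernelIntegral (t + 2) :=
    (integral_interval_sub_left (intervalIntegrable_kernel one_lt_two hx)
      (intervalIntegrable_kernel one_lt_two (by linarith))).symm
  have hinv : IntervalIntegrable (fun u => log (t + 1) * u⁻¹) MeasureTheory.volume (t + 2) x :=
    (continuousOn_inv₀.mono fun u hu =>
      (zero_lt_one.trans (hsub hu)).ne').intervalIntegrable.const_mul _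
  calc ∫ u in (t + 2)..x, 1 / u * log ((u - 1) / (t + 1))
      = ∫ u in (t + 2)..x, (kernel u - log (t + 1) * u⁻¹) := by
        refine integral_congr fun u hu => ?_
        have : 1 < u := hsub hu
        rw [kernel, log_div (by linarith) (by linarith)]
        ring
    _ = _ := by
      rw [integral_sub (intervalIntegrable_kernel (by linarith) hx) hinv, hkernel,
        integral_const_mul, integral_inv_of_pos (by linarith) (by linarith),
        log_div (by linarith) (by linarith)]

theorem doubleIntegral_eq {s : ℝ} (hs : 4 < s) :
    doubleIntegral s = kernelIntegral (s - 1) * kernelIntegral (s - 3) -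
      log (s - 1) * logKernelIntegral (s - 3) - crossIntegral (s - 3) := by
  have hsub : uIcc 2 (s - 3) ⊆ Ioi 1 :=
    ordConnected_Ioi.uIcc_subset one_lt_two (show 1 < s - 3 by linarith)
  have hP : IntervalIntegrable (fun t => kernelIntegral (s - 1) * kernel t)
      MeasureTheory.volume 2 (s - 3) :=
    (intervalIntegrable_kernel one_lt_two (by linarith)).const_mul _
  have hM : IntervalIntegrable (fun t => log (s - 1) * (kernel t * log (t + 1)))
      MeasureTheory.volume 2 (s - 3) :=
    (continuousOn_kernel_mul_log.mono hsub).intervalIntegrable.const_mul _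
  have hC :=
    (continuousOn_crossIntegrand.mono hsub).intervalIntegrable (μ := MeasureTheory.volume)
  calc doubleIntegral s
      = ∫ t in (2 : ℝ)..(s - 3), (kernelIntegral (s - 1) * kernel t -
          log (s - 1) * (kernel t * log (t + 1)) -
          kernel t * (kernelIntegral (t + 2) - log (t + 1) * log (t + 2))) := by
        refine integral_congr fun t ht => ?_
        have : 1 < t := hsub ht
        rw [integral_one_div_mul_log_div (by linarith) (by linarith)]
        ring
    _ = _ := by
      rw [integral_sub (hP.sub hM) hC, integral_sub hP hM, integral_const_mul, integral_const_mul]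
      rfl

theorem hasDerivAt_doubleIntegral {x : ℝ} (hx : 4 < x) :
    HasDerivAt doubleIntegral
      ((log (x - 2) * kernelIntegral (x - 3) - logKernelIntegral (x - 3)) / (x - 1)) x := by
  have hP1 := (hasDerivAt_kernelIntegral (by linarith : 1 < x - 1)).comp_sub_const x 1
  have hP3 := (hasDerivAt_kernelIntegral (by linarith : 1 < x - 3)).comp_sub_const x 3
  have hM3 := (hasDerivAt_logKernelIntegral (by linarith : 1 < x - 3)).comp_sub_const x 3
  have hC3 := (hasDerivAt_crossIntegral (by linarith : 1 < x - 3)).comp_sub_const x 3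
  have hlog := ((hasDerivAt_id' x).sub_const 1).log (by linarith : x - 1 ≠ 0)
  have hclosed := ((hP1.mul hP3).sub (hlog.mul hM3)).sub hC3
  refine (hclosed.congr_deriv ?_).congr_of_eventuallyEq <|
    Filter.mem_of_superset (Ioi_mem_nhds hx) fun y hy => doubleIntegral_eq hy
  rw [kernel, show x - 1 - 1 = x - 2 by ring, show x - 3 + 1 = x - 2 by ring,
    show x - 3 + 2 = x - 1 by ring]
  ring

/-- The linear sieve functions are the solution with `c = 2 e^γ`. -/
structure IsSolution (c : ℝ) (F f : ℝ → ℝ) : Prop where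
  continuousOn_F : ContinuousOn F (Ioi 0)
  continuousOn_f : ContinuousOn f (Ioi 0)
  F_eq_of_le_two : ∀ s : ℝ, 0 < s → s ≤ 2 → F s = c / s
  f_eq_of_le_two : ∀ s : ℝ, 0 < s → s ≤ 2 → f s = 0
  hasDerivAt_mul_F : ∀ s : ℝ, 2 < s → HasDerivAt (fun t => t * F t) (f (s - 1)) s
  hasDerivAt_mul_f : ∀ s : ℝ, 2 < s → HasDerivAt (fun t => t * f t) (F (s - 1)) s

namespace IsSolution

variable {c : ℝ} {F f : ℝ → ℝ} {s : ℝ}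

theorem F_eq_of_le_three (hFf : IsSolution c F f) (hs₀ : 0 < s) (hs : s ≤ 3) : F s = c / s := by
  rcases le_or_gt s 2 with h2 | h2
  · exact hFf.F_eq_of_le_two s hs₀ h2
  refine eq_div_of_hasDerivAt_mul (v := fun _ => c) two_pos hFf.continuousOn_F
    (fun x hx => hFf.hasDerivAt_mul_F x hx.1) (fun x hx => ?_)
    (hFf.F_eq_of_le_two 2 two_pos le_rfl) ⟨h2.le, hs⟩
  rw [hFf.f_eq_of_le_two (x - 1) (by linarith [hx.1]) (by linarith [hx.2])]
  exact hasDerivAt_const x c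

theorem f_eq_of_mem_Icc_two_four (hFf : IsSolution c F f) (hs : s ∈ Icc 2 4) :
    f s = c * log (s - 1) / s := by
  refine eq_div_of_hasDerivAt_mul (v := fun x => c * log (x - 1)) two_pos hFf.continuousOn_f
    (fun x hx => hFf.hasDerivAt_mul_f x hx.1) (fun x hx => ?_)
    (by norm_num [hFf.f_eq_of_le_two]) hs
  rw [hFf.F_eq_of_le_three (by linarith [hx.1]) (by linarith [hx.2])]
  exact ((((hasDerivAt_id' x).sub_const 1).log (by linarith [hx.1])).const_mul c).congr_deriv
    (by ring)

theorem F_eq_of_mem_Icc_three_five (hFf : IsSolution c F f) (hs : s ∈ Icc 3 5) :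
    F s = c * (1 + kernelIntegral (s - 1)) / s := by
  refine eq_div_of_hasDerivAt_mul (v := fun x => c * (1 + kernelIntegral (x - 1))) three_pos
    hFf.continuousOn_F
    (fun x hx => hFf.hasDerivAt_mul_F x (by linarith [hx.1])) (fun x hx => ?_)
    (by norm_num [hFf.F_eq_of_le_three, kernelIntegral]) hs
  rw [hFf.f_eq_of_mem_Icc_two_four ⟨by linarith [hx.1], by linarith [hx.2]⟩]
  exact ((((hasDerivAt_kernelIntegral (by linarith [hx.1])).comp_sub_const x 1).const_add
    1).const_mul c).congr_deriv (by rw [kernel]; ring)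

theorem f_eq_of_mem_Icc_four_six (hFf : IsSolution c F f) (hs : s ∈ Icc 4 6) :
    f s = c * ((1 + kernelIntegral (s - 2)) * log (s - 1) - logKernelIntegral (s - 2)) / s := by
  refine eq_div_of_hasDerivAt_mul
    (v := fun x => c * ((1 + kernelIntegral (x - 2)) * log (x - 1) - logKernelIntegral (x - 2)))
    four_pos hFf.continuousOn_f
    (fun x hx => hFf.hasDerivAt_mul_f x (by linarith [hx.1])) (fun x hx => ?_)
    (by norm_num [hFf.f_eq_of_mem_Icc_two_four, kernelIntegral, logKernelIntegral]) hs
  rw [hFf.F_eq_of_mem_Icc_three_five ⟨by linarith [hx.1], by linarith [hx.2]⟩]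
  have hP := (hasDerivAt_kernelIntegral (by linarith [hx.1])).comp_sub_const x 2
  have hM := (hasDerivAt_logKernelIntegral (by linarith [hx.1])).comp_sub_const x 2
  have hlog := ((hasDerivAt_id' x).sub_const 1).log (by linarith [hx.1] : x - 1 ≠ 0)
  refine ((((hP.const_add 1).mul hlog).sub hM).const_mul c).congr_deriv ?_
  rw [show x - 2 + 1 = x - 1 by ring, show x - 1 - 1 = x - 2 by ring]
  ring

theorem F_eq_of_mem_Icc_five_seven (hFf : IsSolution c F f) (hs : s ∈ Icc 5 7) :
    F s = c * (1 + kernelIntegral (s - 1) + doubleIntegral s) / s := by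
  refine eq_div_of_hasDerivAt_mul
    (v := fun x => c * (1 + kernelIntegral (x - 1) + doubleIntegral x)) (by norm_num)
    hFf.continuousOn_F
    (fun x hx => hFf.hasDerivAt_mul_F x (by linarith [hx.1])) (fun x hx => ?_)
    (by norm_num [hFf.F_eq_of_mem_Icc_three_five, doubleIntegral]) hs
  rw [hFf.f_eq_of_mem_Icc_four_six ⟨by linarith [hx.1], by linarith [hx.2]⟩]
  have hP := (hasDerivAt_kernelIntegral (by linarith [hx.1])).comp_sub_const x 1
  refine (((hP.const_add 1).add (hasDerivAt_doubleIntegral (by linarith [hx.1]))).const_mul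
    c).congr_deriv ?_
  rw [kernel, show x - 1 - 1 = x - 2 by ring, show x - 1 - 2 = x - 3 by ring]
  ring

end IsSolution

end LinearSieve

theorem linear_sieve_F_on_5_7
    (F f : ℝ → ℝ)
    (hFc : ContinuousOn F (Set.Ioi 0)) (hfc : ContinuousOn f (Set.Ioi 0))
    (hF0 : ∀ s : ℝ, 0 < s → s ≤ 2 →
      F s = 2 * Real.exp Real.eulerMascheroniConstant / s)
    (hf0 : ∀ s : ℝ, 0 < s → s ≤ 2 → f s = 0)
    (hF' : ∀ s : ℝ, 2 < s → HasDerivAt (fun t => t * F t) (f (s - 1)) s)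
    (hf' : ∀ s : ℝ, 2 < s → HasDerivAt (fun t => t * f t) (F (s - 1)) s) :
    ∀ s : ℝ, 5 ≤ s → s ≤ 7 →
      F s = 2 * Real.exp Real.eulerMascheroniConstant / s *
        (1 + (∫ t in (2 : ℝ)..(s - 1), Real.log (t - 1) / t) +
          ∫ t in (2 : ℝ)..(s - 3),
            (Real.log (t - 1) / t) *
              ∫ u in (t + 2)..(s - 1), (1 / u) * Real.log ((u - 1) / (t + 1))) := by
  intro s h5 h7
  have hFf : LinearSieve.IsSolution (2 * exp eulerMascheroniConstant) F f :=
    ⟨hFc, hfc, hF0, hf0, hF', hf'⟩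
  rw [hFf.F_eq_of_mem_Icc_five_seven ⟨h5, h7⟩, mul_div_right_comm]
  rfl
end
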